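/- There is no satisfying assignment for the strict constraint X <_m Y (i.e., the constraint is disentailed) if and only if it is not the case that floor(X) <_m ceiling(Y). -/

import Mathlib

namespace MsetPaper

/-- The maximum element of a multiset of naturals (`0` for the empty multiset). -/
def mmax (s : Multiset ℕ) : ℕ := s.sup

/-- The strict multiset order `x <ₘ y` of the paper: either `x` is empty and `y` is not,
or both are nonempty and either `max x < max y`, or the maxima agree and the multisets
with one occurrence of the maximum removed are again strictly ordered. -/
inductive MLt : Multiset ℕ → Multiset ℕ → Prop
  | empty {y : Multiset ℕ} : y ≠ 0 → MLt 0 y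
  | maxLt {x y : Multiset ℕ} : x ≠ 0 → y ≠ 0 → mmax x < mmax y → MLt x y
  | maxEq {x y : Multiset ℕ} : x ≠ 0 → y ≠ 0 → mmax x = mmax y →
      MLt (x.erase (mmax x)) (y.erase (mmax y)) → MLt x y

/-- The (non-strict) multiset order `x ≤ₘ y`. -/
def MLe (x y : Multiset ℕ) : Prop := MLt x y ∨ x = y

/-- The multiset of values taken by a vector. -/
def msetOf {n : ℕ} (x : Fin n → ℕ) : Multiset ℕ := (List.ofFn x : List ℕ)

/-- `(x, y)` is a satisfying assignment for the strict constraint `X <ₘ Y`. -/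
def SatLt {n : ℕ} (DX DY : Fin n → Finset ℕ) (x y : Fin n → ℕ) : Prop :=
  (∀ i, x i ∈ DX i) ∧ (∀ i, y i ∈ DY i) ∧ MLt (msetOf x) (msetOf y)

/-- The value `v` is consistent for the variable `X i` (strict constraint). -/
def ConsXLt {n : ℕ} (DX DY : Fin n → Finset ℕ) (i : Fin n) (v : ℕ) : Prop :=
  ∃ x y, SatLt DX DY x y ∧ x i = v

/-- The value `v` is consistent for the variable `Y i` (strict constraint). -/
def ConsYLt {n : ℕ} (DX DY : Fin n → Finset ℕ) (i : Fin n) (v : ℕ) : Prop :=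
  ∃ x y, SatLt DX DY x y ∧ y i = v

/-- The strict constraint `X <ₘ Y` is generalised arc-consistent. -/
def GACLt {n : ℕ} (DX DY : Fin n → Finset ℕ) : Prop :=
  (∀ i, ∀ v ∈ DX i, ConsXLt DX DY i v) ∧ (∀ i, ∀ v ∈ DY i, ConsYLt DX DY i v)

/-!
Read a multiset of at most `n` elements as the base-`(n + 1)` numeral whose `k`-th digit is the
multiplicity of `k`. No digit overflows, so `<ₘ` becomes the order of these numerals, and the
numeral grows when an element grows. Hence every solution `x <ₘ y` is squeezed between
`floor(X)` and `ceiling(Y)`, which then satisfy `floor(X) <ₘ ceiling(Y)` themselves.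
-/

lemma mmax_mem {s : Multiset ℕ} (hs : s ≠ 0) : mmax s ∈ s := by
  induction s using Multiset.induction with
  | empty => exact absurd rfl hs
  | cons a s ih =>
    rw [mmax, Multiset.sup_cons]
    rcases eq_or_ne s 0 with rfl | hs'
    · simp
    rcases le_total a s.sup with hle | hle
    · rw [sup_eq_right.2 hle]
      exact Multiset.mem_cons_of_mem (ih hs')
    · rw [sup_eq_left.2 hle]
      exact Multiset.mem_cons_self _ _

lemma card_erase_mmax_lt {s : Multiset ℕ} (hs : s ≠ 0) : (s.erase (mmax s)).card < s.card :=
  Multiset.card_erase_lt_of_mem (mmax_mem hs)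

theorem MLt.trichotomous (x y : Multiset ℕ) : MLt x y ∨ x = y ∨ MLt y x := by
  rcases eq_or_ne x 0 with rfl | hx
  · rcases eq_or_ne y 0 with rfl | hy
    · exact .inr (.inl rfl)
    · exact .inl (.empty hy)
  rcases eq_or_ne y 0 with rfl | hy
  · exact .inr (.inr (.empty hx))
  rcases lt_trichotomy (mmax x) (mmax y) with hlt | heq | hgt
  · exact .inl (.maxLt hx hy hlt)
  · have := card_erase_mmax_lt hx
    have := card_erase_mmax_lt hy
    rcases MLt.trichotomous (x.erase (mmax x)) (y.erase (mmax y)) with h | h | h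
    · exact .inl (.maxEq hx hy heq h)
    · refine .inr (.inl ?_)
      calc x = mmax x ::ₘ x.erase (mmax x) := (Multiset.cons_erase (mmax_mem hx)).symm
        _ = mmax y ::ₘ y.erase (mmax y) := by rw [h, heq]
        _ = y := Multiset.cons_erase (mmax_mem hy)
    · exact .inr (.inr (.maxEq hy hx heq.symm h))
  · exact .inr (.inr (.maxLt hy hx hgt))
termination_by x.card + y.card

def weight (B : ℕ) (s : Multiset ℕ) : ℕ := (s.map (B ^ ·)).sum

section weight

variable {B : ℕ}

lemma pow_mmax_le_weight {s : Multiset ℕ} (hs : s ≠ 0) : B ^ mmax s ≤ weight B s :=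
  Multiset.le_sum_of_mem (m := s.map (B ^ ·)) (Multiset.mem_map_of_mem _ (mmax_mem hs))

lemma weight_lt_pow_succ_mmax (s : Multiset ℕ) (hB : s.card < B) :
    weight B s < B ^ (mmax s + 1) :=
  calc weight B s ≤ s.card • B ^ mmax s := by
        rw [weight, ← Multiset.card_map (B ^ ·) s]
        refine Multiset.sum_le_card_nsmul _ _ fun _ hk => ?_
        obtain ⟨e, he, rfl⟩ := Multiset.mem_map.1 hk
        exact Nat.pow_le_pow_right (by omega) (Multiset.le_sup he)
    _ < B * B ^ mmax s := Nat.mul_lt_mul_of_pos_right hB (Nat.pow_pos (by omega))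
    _ = B ^ (mmax s + 1) := (pow_succ' B _).symm

lemma weight_eq_pow_mmax_add_weight_erase {s : Multiset ℕ} (hs : s ≠ 0) :
    weight B s = B ^ mmax s + weight B (s.erase (mmax s)) := by
  conv_lhs => rw [← Multiset.cons_erase (mmax_mem hs)]
  simp [weight]

theorem MLt.weight_lt {x y : Multiset ℕ} (h : MLt x y) (hx : x.card < B) (hy : y.card < B) :
    weight B x < weight B y := by
  induction h with
  | empty hy0 =>
    simpa [weight] using (Nat.pow_pos (a := B) (by omega)).trans_le (pow_mmax_le_weight hy0)
  | @maxLt x y _ hy0 hlt =>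
    calc weight B x < B ^ (mmax x + 1) := weight_lt_pow_succ_mmax x hx
      _ ≤ B ^ mmax y := Nat.pow_le_pow_right (by omega) hlt
      _ ≤ weight B y := pow_mmax_le_weight hy0
  | @maxEq x y hx0 hy0 heq _ ih =>
    rw [weight_eq_pow_mmax_add_weight_erase hx0, weight_eq_pow_mmax_add_weight_erase hy0]
    exact add_lt_add_of_le_of_lt (le_of_eq (congrArg (B ^ ·) heq))
      (ih ((card_erase_mmax_lt hx0).trans hx) ((card_erase_mmax_lt hy0).trans hy))

theorem mlt_iff_weight_lt {x y : Multiset ℕ} (hx : x.card < B) (hy : y.card < B) :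
    MLt x y ↔ weight B x < weight B y := by
  refine ⟨fun h => h.weight_lt hx hy, fun hw => ?_⟩
  rcases MLt.trichotomous x y with h | rfl | h
  · exact h
  · exact absurd hw (lt_irrefl _)
  · exact absurd (h.weight_lt hy hx) hw.not_gt

lemma weight_msetOf {n : ℕ} (x : Fin n → ℕ) : weight B (msetOf x) = ∑ i, B ^ x i := by
  simp [weight, msetOf, List.map_ofFn, List.sum_ofFn, Function.comp_def]

end weight

theorem msetOf_mlt_msetOf_of_le {n : ℕ} {a x y b : Fin n → ℕ} (hax : ∀ i, a i ≤ x i)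
    (hxy : MLt (msetOf x) (msetOf y)) (hyb : ∀ i, y i ≤ b i) : MLt (msetOf a) (msetOf b) := by
  have hcard : ∀ z : Fin n → ℕ, (msetOf z).card < n + 1 := fun z => by simp [msetOf]
  rw [mlt_iff_weight_lt (hcard _) (hcard _)] at hxy ⊢
  simp only [weight_msetOf] at hxy ⊢
  calc ∑ i, (n + 1) ^ a i ≤ ∑ i, (n + 1) ^ x i :=
        Finset.sum_le_sum fun i _ => Nat.pow_le_pow_right n.succ_pos (hax i)
    _ < ∑ i, (n + 1) ^ y i := hxy
    _ ≤ ∑ i, (n + 1) ^ b i :=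
        Finset.sum_le_sum fun i _ => Nat.pow_le_pow_right n.succ_pos (hyb i)

theorem exists_satLt_iff {n : ℕ} (DX DY : Fin n → Finset ℕ)
    (hDX : ∀ i, (DX i).Nonempty) (hDY : ∀ i, (DY i).Nonempty) :
    (∃ x y, SatLt DX DY x y) ↔
      MLt (msetOf fun i => (DX i).min' (hDX i)) (msetOf fun i => (DY i).max' (hDY i)) := by
  constructor
  · rintro ⟨x, y, hx, hy, hxy⟩
    exact msetOf_mlt_msetOf_of_le (fun i => Finset.min'_le _ _ (hx i)) hxy
      (fun i => Finset.le_max' _ _ (hy i))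
  · exact fun h => ⟨_, _, fun i => Finset.min'_mem _ _, fun i => Finset.max'_mem _ _, h⟩

theorem stmt7_general (n : ℕ) (DX DY : Fin n → Finset ℕ)
    (hDX : ∀ i, (DX i).Nonempty) (hDY : ∀ i, (DY i).Nonempty) :
    (¬ ∃ x y, SatLt DX DY x y) ↔
      ¬ MLt (msetOf fun i => (DX i).min' (hDX i)) (msetOf fun i => (DY i).max' (hDY i)) :=
  not_congr (exists_satLt_iff DX DY hDX hDY)

/-- The strict constraint `X <ₘ Y` is disentailed iff `¬ (floor(X) <ₘ ceiling(Y))`. -/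
theorem stmt7 (n : ℕ) (hn : 1 ≤ n) (DX DY : Fin n → Finset ℕ)
    (hDX : ∀ i, (DX i).Nonempty) (hDY : ∀ i, (DY i).Nonempty) :
    (¬ ∃ x y, SatLt DX DY x y) ↔
      ¬ MLt (msetOf fun i => (DX i).min' (hDX i)) (msetOf fun i => (DY i).max' (hDY i)) :=
  stmt7_general n DX DY hDX hDY

end MsetPaper
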